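/- Fix i ∈ {1,…,n} with λ̃_i = 0. Then for every x ∈ ℝ the function τ ↦ λ_i(w̃(τ, Z^0(x))) − λ_i(w̄) belongs to L^1((0,∞)), and ∫_0^t (u(w̃(τ, Z^0(x))) − u(w̄)) dτ → ∫_0^{+∞} (λ_i(w̃(τ, Z^0(x))) − λ_i(w̄)) dτ as t → +∞, pointwise in x on ℝ and uniformly for x in every compact subset of ℝ. -/

import Mathlib

/-!
The `λ̃ⱼ` are distinct (compare `N λⱼ − λ̃ⱼ = M` at `w̄`), so `N` vanishes nowhere and, since
`λ̃ᵢ = 0`, the same relation gives `M / N = λᵢ`: both integrands are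
`λᵢ(w̃(τ, z)) − λᵢ(w̄)`. By linear degeneracy `λᵢ` ignores the `i`-th coordinate, hence this is
bounded by `L ∑_{j ≠ i} |w⁰ⱼ(X⁰(z − λ̃ⱼ τ)) − w̄ⱼ|`, and `λ̃ⱼ ≠ 0` for `j ≠ i`. Each summand is
the profile `y ↦ |w⁰ⱼ(X⁰ y) − w̄ⱼ|`, integrable because the inverse `Z⁰` of `X⁰` is `C`-Lipschitz,
travelling past `z` at the nonzero speed `λ̃ⱼ`. So it is integrable in `τ`, and for `|z| ≤ B` its
integral over `τ > t` is controlled by the mass of the profile in `{|y| ≥ |λ̃ⱼ| t − B}`, which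
tends to `0` independently of `z`.
-/

open MeasureTheory Filter Set
open Function
open scoped NNReal ENNReal

theorem measurable_of_lipschitzWith_inverse {φ ψ : ℝ → ℝ} {L : ℝ≥0} (hφ : LipschitzWith L φ)
    (hψφ : LeftInverse ψ φ) (hφψ : RightInverse ψ φ) : Measurable ψ := fun A hA => by
  rw [← image_eq_preimage_of_inverse hψφ hφψ]
  exact hA.image_of_continuousOn_injOn hφ.continuous.continuousOn hψφ.injective.injOn

theorem map_volume_le_of_lipschitzWith_inverse {φ ψ : ℝ → ℝ} {L : ℝ≥0}
    (hφ : LipschitzWith L φ) (hψφ : LeftInverse ψ φ) (hφψ : RightInverse ψ φ) :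
    Measure.map ψ volume ≤ (L : ℝ≥0∞) • volume := by
  refine Measure.le_iff.2 fun A hA => ?_
  rw [Measure.map_apply (measurable_of_lipschitzWith_inverse hφ hψφ hφψ) hA,
    ← image_eq_preimage_of_inverse hψφ hφψ, ← hausdorffMeasure_real]
  simpa using hφ.hausdorffMeasure_image_le zero_le_one A

theorem lintegral_comp_le_of_lipschitzWith_inverse {φ ψ : ℝ → ℝ} {L : ℝ≥0}
    (hφ : LipschitzWith L φ) (hψφ : LeftInverse ψ φ) (hφψ : RightInverse ψ φ)
    {g : ℝ → ℝ≥0∞} (hg : Measurable g) :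
    ∫⁻ τ, g (ψ τ) ≤ L * ∫⁻ σ, g σ := calc
  ∫⁻ τ, g (ψ τ) = ∫⁻ σ, g σ ∂(Measure.map ψ volume) :=
    (lintegral_map hg (measurable_of_lipschitzWith_inverse hφ hψφ hφψ)).symm
  _ ≤ ∫⁻ σ, g σ ∂((L : ℝ≥0∞) • volume) :=
    lintegral_mono' (map_volume_le_of_lipschitzWith_inverse hφ hψφ hφψ) le_rfl
  _ = L * ∫⁻ σ, g σ := lintegral_smul_measure _ _

theorem lintegral_comp_sub_mul_le {g : ℝ → ℝ≥0∞} (hg : Measurable g) (z : ℝ) {a : ℝ}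
    (ha : a ≠ 0) : ∫⁻ τ, g (z - a * τ) ≤ ‖a⁻¹‖₊ * ∫⁻ y, g y := by
  refine lintegral_comp_le_of_lipschitzWith_inverse (φ := fun y => a⁻¹ * (z - y)) ?_ ?_ ?_ hg
  · refine LipschitzWith.of_dist_le_mul fun x y => ?_
    rw [Real.dist_eq, Real.dist_eq, ← mul_sub, abs_mul, sub_sub_sub_cancel_left, abs_sub_comm]
    rfl
  · intro y; field_simp; ring
  · intro τ; field_simp; ring

theorem tendsto_lintegral_indicator_le_abs_atTop {g : ℝ → ℝ≥0∞} (hg : Measurable g)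
    (hfin : ∫⁻ y, g y ≠ ∞) :
    Tendsto (fun R => ∫⁻ y, {y | R ≤ |y|}.indicator g y) atTop (nhds 0) := by
  have hlim := tendsto_lintegral_filter_of_dominated_convergence g
    (Eventually.of_forall fun R => hg.indicator (measurableSet_le measurable_const measurable_abs))
    (Eventually.of_forall fun R => Eventually.of_forall (indicator_le_self _ g)) hfin
    (Eventually.of_forall fun y => tendsto_const_nhds.congr' <|
      (eventually_gt_atTop |y|).mono fun R hR =>
        (indicator_of_notMem (s := {y | R ≤ |y|}) (not_le.2 hR) g).symm)
  simpa using hlim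

theorem setLIntegral_Ioi_comp_sub_mul_le {g : ℝ → ℝ≥0∞} (hg : Measurable g) {a : ℝ}
    (ha : a ≠ 0) {z t R : ℝ} (hR : R + |z| ≤ |a| * t) :
    ∫⁻ τ in Ioi t, g (z - a * τ) ≤ ‖a⁻¹‖₊ * ∫⁻ y, {y | R ≤ |y|}.indicator g y := by
  have hmem : ∀ τ ∈ Ioi t, R ≤ |z - a * τ| := fun τ hτ => by
    have h := abs_sub_abs_le_abs_sub (a * τ) z
    rw [abs_mul, abs_sub_comm] at h
    nlinarith [abs_nonneg a, le_abs_self τ, mem_Ioi.1 hτ]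
  calc ∫⁻ τ in Ioi t, g (z - a * τ)
      = ∫⁻ τ in Ioi t, {y | R ≤ |y|}.indicator g (z - a * τ) :=
        setLIntegral_congr_fun measurableSet_Ioi fun τ hτ =>
          (indicator_of_mem (s := {y | R ≤ |y|}) (hmem τ hτ) g).symm
    _ ≤ ∫⁻ τ, {y | R ≤ |y|}.indicator g (z - a * τ) := setLIntegral_le_lintegral _ _
    _ ≤ _ := lintegral_comp_sub_mul_le
        (hg.indicator (measurableSet_le measurable_const measurable_abs)) z ha

section DominatedBySums

variable {ι : Type*} {J : Finset ι} {a : ι → ℝ} {g : ι → ℝ → ℝ≥0∞} {f : ℝ → ℝ → ℝ}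

theorem integrable_of_enorm_le_sum_comp_sub_mul (ha : ∀ j ∈ J, a j ≠ 0)
    (hg : ∀ j, Measurable (g j)) (hfin : ∀ j ∈ J, ∫⁻ y, g j y ≠ ∞)
    (hfm : ∀ z, AEStronglyMeasurable (f z))
    (hf : ∀ z τ, ‖f z τ‖ₑ ≤ ∑ j ∈ J, g j (z - a j * τ)) (z : ℝ) :
    Integrable (f z) := by
  refine ⟨hfm z, (lintegral_mono (hf z)).trans_lt ?_⟩
  have hm : ∀ j ∈ J, Measurable fun τ => g j (z - a j * τ) := fun j _ =>
    (hg j).comp (by fun_prop)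
  rw [lintegral_finsetSum _ hm]
  exact ENNReal.sum_lt_top.2 fun j hj => (lintegral_comp_sub_mul_le (hg j) z (ha j hj)).trans_lt
    (ENNReal.mul_lt_top ENNReal.coe_lt_top (hfin j hj).lt_top)

theorem tendstoUniformlyOn_intervalIntegral_of_enorm_le_sum_comp_sub_mul
    (ha : ∀ j ∈ J, a j ≠ 0)
    (hg : ∀ j, Measurable (g j)) (hfin : ∀ j ∈ J, ∫⁻ y, g j y ≠ ∞)
    (hfm : ∀ z, AEStronglyMeasurable (f z))
    (hf : ∀ z τ, ‖f z τ‖ₑ ≤ ∑ j ∈ J, g j (z - a j * τ))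
    {S : Set ℝ} (hS : Bornology.IsBounded S) :
    TendstoUniformlyOn (fun t z => ∫ τ in (0 : ℝ)..t, f z τ) (fun z => ∫ τ in Ioi 0, f z τ)
      atTop S := by
  obtain ⟨B, hB⟩ := hS.exists_norm_le
  set T : ℝ → ℝ≥0∞ := fun t =>
    ∑ j ∈ J, ‖(a j)⁻¹‖₊ * ∫⁻ y, {y | |a j| * t - B ≤ |y|}.indicator (g j) y
  have hT : Tendsto T atTop (nhds 0) := by
    rw [← Finset.sum_const_zero (s := J)]
    refine tendsto_finsetSum _ fun j hj => ?_
    have hR : Tendsto (fun t => |a j| * t - B) atTop atTop :=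
      tendsto_atTop_add_const_right _ _
        (tendsto_id.const_mul_atTop (abs_pos.2 (ha j hj)))
    simpa using ENNReal.Tendsto.const_mul
      ((tendsto_lintegral_indicator_le_abs_atTop (hg j) (hfin j hj)).comp hR)
      (Or.inr ENNReal.coe_ne_top)
  rw [EMetric.tendstoUniformlyOn_iff]
  intro ε hε
  filter_upwards [hT.eventually_lt_const hε] with t hTt z hz
  have hint := integrable_of_enorm_le_sum_comp_sub_mul ha hg hfin hfm hf z
  calc edist (∫ τ in Ioi 0, f z τ) (∫ τ in (0 : ℝ)..t, f z τ)
      = ‖∫ τ in Ioi t, f z τ‖ₑ := by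
        rw [edist_eq_enorm_sub, ← intervalIntegral.integral_interval_add_Ioi hint.integrableOn
          hint.integrableOn, add_sub_cancel_left]
    _ ≤ ∫⁻ τ in Ioi t, ∑ j ∈ J, g j (z - a j * τ) :=
        (enorm_integral_le_lintegral_enorm _).trans (lintegral_mono (hf z))
    _ = ∑ j ∈ J, ∫⁻ τ in Ioi t, g j (z - a j * τ) :=
        lintegral_finsetSum _ fun j _ => (hg j).comp (by fun_prop)
    _ ≤ T t := Finset.sum_le_sum fun j hj => setLIntegral_Ioi_comp_sub_mul_le (hg j) (ha j hj)
        (by linarith [Real.norm_eq_abs z ▸ hB z hz])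
    _ < ε := hTt

end DominatedBySums

theorem lipschitzWith_primitive_of_norm_le {f : ℝ → ℝ} {C : ℝ} (hfm : AEStronglyMeasurable f)
    (hf : ∀ x, ‖f x‖ ≤ C) : LipschitzWith C.toNNReal fun x => ∫ ξ in (0 : ℝ)..x, f ξ := by
  have hint : ∀ a b : ℝ, IntervalIntegrable f volume a b := fun a b =>
    intervalIntegrable_const.mono_fun' hfm.restrict (Eventually.of_forall hf)
  refine LipschitzWith.of_dist_le' fun x y => ?_
  rw [dist_eq_norm, Real.dist_eq, intervalIntegral.integral_interval_sub_left
    (hint 0 x) (hint 0 y)]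
  exact intervalIntegral.norm_integral_le_of_norm_le_const fun ξ _ => hf ξ

theorem edist_le_sum_erase_of_lipschitzOnWith {ι : Type*} [Fintype ι] [DecidableEq ι]
    {F : (ι → ℝ) → ℝ} {R : ℝ} {L : ℝ≥0} (hF : LipschitzOnWith L F (Metric.closedBall 0 R))
    {i : ι} (hFi : ∀ w v : ι → ℝ, (∀ j, j ≠ i → w j = v j) → F w = F v) {w v : ι → ℝ}
    (hw : w ∈ Metric.closedBall 0 R) (hv : v ∈ Metric.closedBall 0 R) :
    edist (F w) (F v) ≤ L * ∑ j ∈ Finset.univ.erase i, edist (w j) (v j) := by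
  set u := update w i (v i)
  have hR : 0 ≤ R := Metric.nonempty_closedBall.1 ⟨v, hv⟩
  have hu : u ∈ Metric.closedBall 0 R := by
    rw [closedBall_pi _ hR] at hw hv ⊢
    intro j _
    rcases eq_or_ne j i with rfl | hj
    · simpa [u] using hv j trivial
    · simpa [u, hj] using hw j trivial
  have hFwu : F w = F u := hFi w u fun j hj => (update_of_ne hj _ _).symm
  have hdist : edist u v ≤ ∑ j ∈ Finset.univ.erase i, edist (w j) (v j) := by
    refine edist_pi_le_iff.2 fun j => ?_
    rcases eq_or_ne j i with rfl | hj
    · simp [u]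
    · simpa [u, hj] using Finset.single_le_sum (f := fun j => edist (w j) (v j))
        (fun _ _ => zero_le) (Finset.mem_erase.2 ⟨hj, Finset.mem_univ j⟩)
  rw [hFwu]
  exact hF.edist_le_mul_of_le hu hv hdist

theorem exists_edist_le_sum_erase_of_contDiff {ι : Type*} [Fintype ι] [DecidableEq ι]
    {F : (ι → ℝ) → ℝ} (hF : ContDiff ℝ 1 F) {i : ι}
    (hFi : ∀ w v : ι → ℝ, (∀ j, j ≠ i → w j = v j) → F w = F v)
    {K : Set (ι → ℝ)} (hK : Bornology.IsBounded K) :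
    ∃ L : ℝ≥0, ∀ w v : ι → ℝ, (∀ j, ∃ k ∈ K, w j = k j) → v ∈ K →
      edist (F w) (F v) ≤ L * ∑ j ∈ Finset.univ.erase i, edist (w j) (v j) := by
  obtain ⟨R, hR, hKR⟩ := hK.subset_closedBall_lt 0 0
  obtain ⟨L, hL⟩ := hF.contDiffOn.exists_lipschitzOnWith one_ne_zero (convex_closedBall 0 R)
    (isCompact_closedBall 0 R)
  refine ⟨L, fun w v hw hv => edist_le_sum_erase_of_lipschitzOnWith hL hFi ?_ (hKR hv)⟩
  rw [mem_closedBall_zero_iff, pi_norm_le_iff_of_nonneg hR.le]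
  intro j
  obtain ⟨k, hk, hwk⟩ := hw j
  rw [hwk]
  exact (norm_le_pi_norm k j).trans (mem_closedBall_zero_iff.1 (hKR hk))

theorem exists_lintegrable_bound_of_linearlyDegenerate {n : ℕ} {K : Set (Fin n → ℝ)}
    {F : (Fin n → ℝ) → ℝ} {i : Fin n} {wbar : Fin n → ℝ} {w0 : ℝ → Fin n → ℝ} {X0 Z0 : ℝ → ℝ}
    {C : ℝ≥0} {a : Fin n → ℝ} (hK : Bornology.IsBounded K)
    (hF : ContDiff ℝ 1 F) (hFi : ∀ w v : Fin n → ℝ, (∀ j, j ≠ i → w j = v j) → F w = F v)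
    (hwbar : wbar ∈ K) (hw0m : Measurable w0) (hw0K : ∀ x, w0 x ∈ K)
    (hw0L1 : Integrable fun x => w0 x - wbar) (hZ0 : LipschitzWith C Z0)
    (hX0Z0 : LeftInverse X0 Z0) (hZ0X0 : RightInverse X0 Z0) :
    ∃ g : Fin n → ℝ → ℝ≥0∞, (∀ j, Measurable (g j)) ∧ (∀ j, ∫⁻ y, g j y ≠ ∞) ∧
      ∀ z τ, ‖F (fun j => w0 (X0 (z - a j * τ)) j) - F wbar‖ₑ ≤
        ∑ j ∈ Finset.univ.erase i, g j (z - a j * τ) := by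
  obtain ⟨L, hL⟩ := exists_edist_le_sum_erase_of_contDiff hF hFi hK
  have hX0m := measurable_of_lipschitzWith_inverse hZ0 hX0Z0 hZ0X0
  have hcoord : ∀ j, Measurable fun σ => edist (w0 σ j) (wbar j) := fun j =>
    ((measurable_pi_apply j).comp hw0m).edist measurable_const
  refine ⟨fun j y => L * edist (w0 (X0 y) j) (wbar j),
    fun j => ((hcoord j).comp hX0m).const_mul _, fun j => ?_, fun z τ => ?_⟩
  · rw [lintegral_const_mul' _ _ ENNReal.coe_ne_top]
    refine ENNReal.mul_ne_top ENNReal.coe_ne_top (ne_top_of_le_ne_top ?_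
      (lintegral_comp_le_of_lipschitzWith_inverse hZ0 hX0Z0 hZ0X0 (hcoord j)))
    refine ENNReal.mul_ne_top ENNReal.coe_ne_top (ne_top_of_le_ne_top hw0L1.2.ne ?_)
    exact lintegral_mono fun σ =>
      (edist_le_pi_edist (w0 σ) wbar j).trans_eq (edist_eq_enorm_sub _ _)
  · rw [← edist_eq_enorm_sub, ← Finset.mul_sum]
    exact hL _ _ (fun j => ⟨_, hw0K _, rfl⟩) hwbar

section RichSystem

variable {E ι : Type*} {N M : E → ℝ} {lam : ι → E → ℝ} {tlam : ι → ℝ}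

theorem injective_of_mul_sub_eq (h : ∀ w i, N w * lam i w - tlam i = M w) {w : E}
    (hw : N w ≠ 0) (hlam : Injective fun i => lam i w) : Injective tlam := fun i j hij =>
  hlam (mul_left_cancel₀ hw (by linarith [h w i, h w j]))

theorem ne_zero_of_mul_sub_eq (h : ∀ w i, N w * lam i w - tlam i = M w)
    (htlam : Injective tlam) {i j : ι} (hij : i ≠ j) (v : E) : N v ≠ 0 := fun hv => by
  have hi := h v i
  have hj := h v j
  rw [hv, zero_mul] at hi hj
  exact hij (htlam (by linarith))

theorem div_eq_of_mul_sub_eq (h : ∀ w i, N w * lam i w - tlam i = M w) {v : E} (hv : N v ≠ 0)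
    {i : ι} (hi : tlam i = 0) : M v / N v = lam i v := by
  rw [← h v i, hi, sub_zero, mul_div_cancel_left₀ _ hv]

end RichSystem

theorem stmt_2
    (n : ℕ) (hn : 2 ≤ n)
    (K : Set (Fin n → ℝ)) (hK : IsCompact K)
    (lam : Fin n → (Fin n → ℝ) → ℝ) (hlam : ∀ i, ContDiff ℝ 1 (lam i))
    (N : (Fin n → ℝ) → ℝ) (hN : ContDiff ℝ 1 N)
    (c C : ℝ) (hc : 0 < c)
    (hNbd : ∀ w ∈ convexHull ℝ K, c ≤ N w ∧ N w ≤ C)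
    (M : (Fin n → ℝ) → ℝ) (tlam : Fin n → ℝ)
    (hrich : ∀ (w : Fin n → ℝ) (i : Fin n), N w * lam i w - tlam i = M w)
    (hstrict : ∀ w : Fin n → ℝ, StrictMono (fun i => lam i w))
    (hlindeg : ∀ (i : Fin n) (w v : Fin n → ℝ),
      (∀ j, j ≠ i → w j = v j) → lam i w = lam i v)
    (wbar : Fin n → ℝ) (hwbarK : wbar ∈ K)
    (w0 : ℝ → Fin n → ℝ) (hw0m : Measurable w0) (hw0K : ∀ x, w0 x ∈ K)
    (hw0L1 : Integrable (fun x => w0 x - wbar))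
    (Z0 X0 : ℝ → ℝ)
    (hZ0 : ∀ x, Z0 x = ∫ ξ in (0:ℝ)..x, N (w0 ξ))
    (hX0Z0 : ∀ x, X0 (Z0 x) = x) (hZ0X0 : ∀ z, Z0 (X0 z) = z)
    (wt : ℝ → ℝ → Fin n → ℝ)
    (hwt : ∀ t z i, wt t z i = w0 (X0 (z - tlam i * t)) i)
    (i : Fin n) (hi : tlam i = 0) :
    (∀ x : ℝ, IntegrableOn (fun τ => lam i (wt τ (Z0 x)) - lam i wbar) (Ioi (0:ℝ))) ∧
    (∀ x : ℝ, Tendsto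
        (fun t => ∫ τ in (0:ℝ)..t,
          (M (wt τ (Z0 x)) / N (wt τ (Z0 x)) - M wbar / N wbar))
        atTop (nhds (∫ τ in Ioi (0:ℝ), (lam i (wt τ (Z0 x)) - lam i wbar)))) ∧
    (∀ s : Set ℝ, IsCompact s → TendstoUniformlyOn
        (fun t x => ∫ τ in (0:ℝ)..t,
          (M (wt τ (Z0 x)) / N (wt τ (Z0 x)) - M wbar / N wbar))
        (fun x => ∫ τ in Ioi (0:ℝ), (lam i (wt τ (Z0 x)) - lam i wbar))
        atTop s) := by
  have : Nontrivial (Fin n) := Fin.nontrivial_iff_two_le.2 hn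
  obtain ⟨j0, hj0⟩ := exists_ne i
  have htlam : Injective tlam := injective_of_mul_sub_eq hrich
    (hc.trans_le (hNbd _ (subset_convexHull ℝ K hwbarK)).1).ne' (hstrict wbar).injective
  have ha : ∀ j ∈ Finset.univ.erase i, tlam j ≠ 0 := fun j hj =>
    hi ▸ htlam.ne (Finset.ne_of_mem_erase hj)
  simp only [div_eq_of_mul_sub_eq hrich (ne_zero_of_mul_sub_eq hrich htlam hj0 _) hi]
  obtain rfl : wt = fun t z j => w0 (X0 (z - tlam j * t)) j := funext₃ hwt
  have hZ0lip : LipschitzWith C.toNNReal Z0 := by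
    rw [funext hZ0]
    have hNw0 x : c ≤ N (w0 x) ∧ N (w0 x) ≤ C := hNbd _ (subset_convexHull ℝ K (hw0K x))
    exact lipschitzWith_primitive_of_norm_le
      (hN.continuous.measurable.comp hw0m).aestronglyMeasurable
      fun x => abs_le.2 ⟨by linarith [hNw0 x], (hNw0 x).2⟩
  obtain ⟨g, hgm, hgfin, hbound⟩ := exists_lintegrable_bound_of_linearlyDegenerate (a := tlam)
    hK.isBounded (hlam i) (hlindeg i) hwbarK hw0m hw0K hw0L1 hZ0lip hX0Z0 hZ0X0
  have hX0m := measurable_of_lipschitzWith_inverse hZ0lip hX0Z0 hZ0X0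
  have hfm (z : ℝ) : AEStronglyMeasurable
      fun τ => lam i (fun j => w0 (X0 (z - tlam j * τ)) j) - lam i wbar :=
    (((hlam i).continuous.measurable.comp
      (measurable_pi_lambda _ fun j => by fun_prop)).sub_const _).aestronglyMeasurable
  have hint := integrable_of_enorm_le_sum_comp_sub_mul ha hgm (fun j _ => hgfin j) hfm hbound
  refine ⟨fun x => (hint _).integrableOn,
    fun x => intervalIntegral_tendsto_integral_Ioi 0 (hint _).integrableOn tendsto_id,
    fun s hs => ?_⟩
  exact ((tendstoUniformlyOn_intervalIntegral_of_enorm_le_sum_comp_sub_mul ha hgm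
    (fun j _ => hgfin j) hfm hbound (hs.image hZ0lip.continuous).isBounded).comp Z0).mono
    (subset_preimage_image Z0 s)
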